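/- arXiv:2601.21486 — 4 statements merged into one kernel-verified Lean document; each statement's English description precedes it below -/
import Mathlib

section
/- Let X be a nonzero Banach space. Then X has the Daugavet property if and only if for every y in the unit sphere S_X, every x* in the unit sphere S_{X*} of the dual, and every ε > 0, there exists x ∈ S_X such that x*(x) ≥ 1 − ε and ‖x + y‖ ≥ 2 − ε. -/
open ContinuousLinearMap

/-- A normed space `X` has the Daugavet property if `‖Id + T‖ = 1 + ‖T‖` for every
rank-one bounded linear operator `T : X → X`, i.e. every operator of the form
`x ↦ φ(x) • y` with `φ ∈ X*` and `y ∈ X`. -/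
def HasDaugavetProperty (X : Type*) [NormedAddCommGroup X] [NormedSpace ℝ X] : Prop :=
  ∀ (φ : X →L[ℝ] ℝ) (y : X),
    ‖ContinuousLinearMap.id ℝ X + φ.smulRight y‖ = 1 + ‖φ.smulRight y‖

/-- If `u, v` are unit vectors with `‖u + v‖ ≥ 2 - δ`, then `‖u + t • v‖ ≥ (1+t)(1-δ)`
for all `t ≥ 0`.  Proved using a norming functional for `u + v`. -/
lemma daugavet_aux {X : Type*} [NormedAddCommGroup X] [NormedSpace ℝ X]
    {u v : X} {δ : ℝ} (hu : ‖u‖ = 1) (hv : ‖v‖ = 1) (hδ : δ < 2)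
    (h : 2 - δ ≤ ‖u + v‖) {t : ℝ} (ht : 0 ≤ t) :
    (1 + t) * (1 - δ) ≤ ‖u + t • v‖ := by
  have hne : u + v ≠ 0 := by
    intro h0
    rw [h0, norm_zero] at h
    linarith
  obtain ⟨f, hf1, hfx⟩ := exists_dual_vector ℝ (u + v) (norm_ne_zero_iff.mpr hne)
  have hfx' : f u + f v = ‖u + v‖ := by
    have := hfx
    rw [map_add] at this
    simpa using this
  have hfu : f u ≤ 1 := by
    have := f.le_opNorm u
    rw [hf1, hu, Real.norm_eq_abs] at this
    have := le_abs_self (f u)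
    linarith [abs_le.mp (by simpa using f.le_opNorm u |>.trans_eq (by rw [hf1, hu, one_mul]))]
  have hfv : f v ≤ 1 := by
    have h1 := f.le_opNorm v
    rw [hf1, hv, Real.norm_eq_abs, one_mul] at h1
    linarith [le_abs_self (f v)]
  have hfu' : 1 - δ ≤ f u := by linarith
  have hfv' : 1 - δ ≤ f v := by linarith
  have key : f (u + t • v) ≤ ‖u + t • v‖ := by
    have h1 := f.le_opNorm (u + t • v)
    rw [hf1, Real.norm_eq_abs, one_mul] at h1
    linarith [le_abs_self (f (u + t • v))]
  have : f (u + t • v) = f u + t * f v := by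
    rw [map_add, map_smul]; simp
  rw [this] at key
  nlinarith [mul_le_mul_of_nonneg_left hfv' ht]

set_option maxHeartbeats 1000000 in
/-- A nonzero Banach space `X` has the Daugavet property iff for every `y ∈ S_X`,
every `x* ∈ S_{X*}` and every `ε > 0` there is `x ∈ S_X` with `x*(x) ≥ 1 - ε` and
`‖x + y‖ ≥ 2 - ε`. -/
theorem daugavet_iff_sphere_condition (X : Type*) [NormedAddCommGroup X] [NormedSpace ℝ X]
    [CompleteSpace X] [Nontrivial X] :
    HasDaugavetProperty X ↔
      ∀ y : X, ‖y‖ = 1 → ∀ φ : X →L[ℝ] ℝ, ‖φ‖ = 1 → ∀ ε : ℝ, 0 < ε →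
        ∃ x : X, ‖x‖ = 1 ∧ φ x ≥ 1 - ε ∧ ‖x + y‖ ≥ 2 - ε := by
  constructor
  · -- Forward direction
    intro hD y hy φ hφ ε hε
    set δ : ℝ := min (ε / 2) (1 / 2) with hδdef
    have hδpos : 0 < δ := lt_min (by linarith) (by norm_num)
    have hδε : δ ≤ ε / 2 := min_le_left _ _
    have hδhalf : δ ≤ 1 / 2 := min_le_right _ _
    have hT : ‖φ.smulRight y‖ = 1 := by
      rw [norm_smulRight_apply, hφ, hy, one_mul]
    have h2 : ‖ContinuousLinearMap.id ℝ X + φ.smulRight y‖ = 2 := by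
      rw [hD, hT]; norm_num
    have hlt : (2 - δ : ℝ) < ‖ContinuousLinearMap.id ℝ X + φ.smulRight y‖ := by
      rw [h2]; linarith
    obtain ⟨x, hx1, hx2⟩ :=
      (ContinuousLinearMap.id ℝ X + φ.smulRight y).exists_lt_apply_of_lt_opNorm hlt
    have hx2' : 2 - δ < ‖x + φ x • y‖ := by
      simpa [ContinuousLinearMap.add_apply, ContinuousLinearMap.smulRight_apply] using hx2
    have hx0 : x ≠ 0 := by
      intro h0
      rw [h0] at hx2'
      simp at hx2'
      linarith
    have hxpos : 0 < ‖x‖ := norm_pos_iff.mpr hx0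
    set u : X := ‖x‖⁻¹ • x with hudef
    have hu1 : ‖u‖ = 1 := norm_smul_inv_norm hx0
    have hφu : φ u = ‖x‖⁻¹ * φ x := by rw [hudef, map_smul]; simp
    have hrw : u + φ u • y = ‖x‖⁻¹ • (x + φ x • y) := by
      rw [hudef, hφu, smul_add, smul_smul]
    have hubig : 2 - δ < ‖u + φ u • y‖ := by
      rw [hrw, norm_smul, Real.norm_eq_abs, abs_of_pos (inv_pos.mpr hxpos)]
      have hinv : 1 ≤ ‖x‖⁻¹ := by
        have hmul : ‖x‖ * ‖x‖⁻¹ = 1 := mul_inv_cancel₀ hxpos.ne'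
        nlinarith [hx1.le]
      nlinarith [hx2', norm_nonneg (x + φ x • y)]
    have hub : ‖u + φ u • y‖ ≤ 1 + |φ u| := by
      calc ‖u + φ u • y‖ ≤ ‖u‖ + ‖φ u • y‖ := norm_add_le _ _
        _ = 1 + |φ u| := by rw [hu1, norm_smul, Real.norm_eq_abs, hy, mul_one]
    have habs : 1 - δ < |φ u| := by linarith
    -- pick the right sign
    have key : ∃ v : X, ‖v‖ = 1 ∧ 1 - δ < φ v ∧ 2 - δ < ‖v + φ v • y‖ := by
      rcases le_total 0 (φ u) with hs | hs
      · exact ⟨u, hu1, by rwa [abs_of_nonneg hs] at habs, hubig⟩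
      · refine ⟨-u, by rw [norm_neg, hu1], ?_, ?_⟩
        · rw [map_neg]
          rwa [abs_of_nonpos hs] at habs
        · rw [map_neg]
          have : -u + (-φ u) • y = -(u + φ u • y) := by
            rw [neg_smul]; abel
          rw [this, norm_neg]
          exact hubig
    obtain ⟨v, hv1, hv2, hv3⟩ := key
    have hφv1 : φ v ≤ 1 := by
      have h1 := φ.le_opNorm v
      rw [hφ, hv1, Real.norm_eq_abs, one_mul] at h1
      linarith [le_abs_self (φ v)]
    have hvy : 2 - 2 * δ ≤ ‖v + y‖ := by
      have hsplit : v + y = (v + φ v • y) - (φ v - 1) • y := by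
        rw [sub_smul, one_smul]; abel
      have h1 : ‖(φ v - 1) • y‖ = 1 - φ v := by
        rw [norm_smul, Real.norm_eq_abs, hy, mul_one, abs_of_nonpos (by linarith)]
        ring
      calc 2 - 2 * δ ≤ ‖v + φ v • y‖ - ‖(φ v - 1) • y‖ := by rw [h1]; linarith
        _ ≤ ‖(v + φ v • y) - (φ v - 1) • y‖ := norm_sub_norm_le _ _
        _ = ‖v + y‖ := by rw [← hsplit]
    exact ⟨v, hv1, by linarith, by linarith⟩
  · -- Reverse direction
    intro h φ y
    have hid : ‖ContinuousLinearMap.id ℝ X‖ = 1 := norm_id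
    refine le_antisymm ?_ ?_
    · calc ‖ContinuousLinearMap.id ℝ X + φ.smulRight y‖
          ≤ ‖ContinuousLinearMap.id ℝ X‖ + ‖φ.smulRight y‖ := norm_add_le _ _
        _ = 1 + ‖φ.smulRight y‖ := by rw [hid]
    · rcases eq_or_ne y 0 with hy0 | hy0
      · subst hy0
        have : φ.smulRight (0 : X) = 0 := by ext x; simp
        rw [this]
        simp [hid]
      rcases eq_or_ne φ 0 with hφ0 | hφ0
      · subst hφ0
        have : (0 : X →L[ℝ] ℝ).smulRight y = 0 := by ext x; simp
        rw [this]
        simp [hid]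
      have ha : 0 < ‖φ‖ := norm_pos_iff.mpr hφ0
      have hb : 0 < ‖y‖ := norm_pos_iff.mpr hy0
      set c : ℝ := ‖φ‖ * ‖y‖ with hcdef
      have hc : 0 < c := mul_pos ha hb
      have hTnorm : ‖φ.smulRight y‖ = c := norm_smulRight_apply _ _
      rw [hTnorm]
      refine le_of_forall_pos_le_add ?_
      intro ε hε
      set δ : ℝ := min (ε / (1 + 2 * c)) (1 / 2) with hδdef
      have h12c : 0 < 1 + 2 * c := by linarith
      have hδpos : 0 < δ := lt_min (div_pos hε h12c) (by norm_num)
      have hδhalf : δ ≤ 1 / 2 := min_le_right _ _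
      have hδε : δ * (1 + 2 * c) ≤ ε := by
        have : δ ≤ ε / (1 + 2 * c) := min_le_left _ _
        calc δ * (1 + 2 * c) ≤ (ε / (1 + 2 * c)) * (1 + 2 * c) := by
              exact mul_le_mul_of_nonneg_right this h12c.le
          _ = ε := by field_simp
      set φ' : X →L[ℝ] ℝ := ‖φ‖⁻¹ • φ with hφ'def
      set y' : X := ‖y‖⁻¹ • y with hy'def
      have hφ'1 : ‖φ'‖ = 1 := by
        rw [hφ'def, norm_smul ‖φ‖⁻¹ φ, Real.norm_eq_abs, abs_of_pos (inv_pos.mpr ha),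
          inv_mul_cancel₀ ha.ne']
      have hy'1 : ‖y'‖ = 1 := norm_smul_inv_norm hy0
      obtain ⟨x, hx1, hx2, hx3⟩ := h y' hy'1 φ' hφ'1 δ hδpos
      have hφ'x1 : φ' x ≤ 1 := by
        have h1 := φ'.le_opNorm x
        rw [hφ'1, hx1, Real.norm_eq_abs, one_mul] at h1
        linarith [le_abs_self (φ' x)]
      have hφ'xpos : 0 ≤ φ' x := by linarith
      set t : ℝ := c * φ' x with htdef
      have htpos : 0 ≤ t := mul_nonneg hc.le hφ'xpos
      have hφ'x : φ' x = ‖φ‖⁻¹ * φ x := by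
        rw [hφ'def]; simp
      have hφx : φ x = ‖φ‖ * φ' x := by
        rw [hφ'x]
        field_simp
      have hrw : x + φ x • y = x + t • y' := by
        have : t • y' = φ x • y := by
          rw [hy'def, smul_smul, htdef, hcdef, hφx]
          congr 1
          field_simp
        rw [this]
      have hlow : (1 + t) * (1 - δ) ≤ ‖x + t • y'‖ :=
        daugavet_aux hx1 hy'1 (by linarith) hx3 htpos
      have happly : ‖x + φ x • y‖ ≤ ‖ContinuousLinearMap.id ℝ X + φ.smulRight y‖ := by
        have h1 := (ContinuousLinearMap.id ℝ X + φ.smulRight y).le_opNorm x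
        rw [hx1, mul_one] at h1
        simpa [ContinuousLinearMap.add_apply, ContinuousLinearMap.smulRight_apply] using h1
      have htlb : c * (1 - δ) ≤ t := by
        rw [htdef]
        exact mul_le_mul_of_nonneg_left hx2 hc.le
      have htub : t ≤ c := by
        rw [htdef]
        nlinarith
      rw [hrw] at happly
      nlinarith [hlow, happly]
end

section
/- Let X be a nonzero Banach space. Then X has the Daugavet property if and only if for every ε > 0 and every y ∈ S_X, the closed convex hull of the set {u ∈ (1+ε)B_X : ‖y + u‖ ≥ 2 − ε} contains the unit sphere S_X. -/
lemma daugavet_slice {X : Type*} [NormedAddCommGroup X] [NormedSpace ℝ X]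
    (hD : HasDaugavetProperty X) (f : X →L[ℝ] ℝ) (hf : ‖f‖ = 1) (y : X) (hy : ‖y‖ = 1)
    {η : ℝ} (hη : 0 < η) :
    ∃ u : X, ‖u‖ ≤ 1 ∧ 1 - η ≤ f u ∧ 2 - 2 * η ≤ ‖y + u‖ := by
  have hnorm : ‖ContinuousLinearMap.id ℝ X + f.smulRight y‖ = 2 := by
    rw [hD f y, ContinuousLinearMap.norm_smulRight_apply, hf, hy]; ring
  obtain ⟨x, hx1, hx2⟩ := (ContinuousLinearMap.id ℝ X + f.smulRight y).exists_lt_apply_of_lt_opNorm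
    (r := 2 - η) (by rw [hnorm]; linarith)
  have happ : (ContinuousLinearMap.id ℝ X + f.smulRight y) x = x + f x • y := rfl
  rw [happ] at hx2
  have hfx_le : |f x| ≤ 1 := by
    calc |f x| = ‖f x‖ := (Real.norm_eq_abs _).symm
    _ ≤ ‖f‖ * ‖x‖ := f.le_opNorm x
    _ ≤ 1 := by rw [hf]; linarith
  have hfx : 1 - η < |f x| := by
    have h1 : ‖x + f x • y‖ ≤ ‖x‖ + ‖f x • y‖ := norm_add_le _ _
    have h2 : ‖f x • y‖ = |f x| := by rw [norm_smul, hy, Real.norm_eq_abs, mul_one]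
    rw [h2] at h1
    linarith
  set s : ℝ := if 0 ≤ f x then 1 else -1 with hs
  have hs1 : |s| = 1 := by rw [hs]; split <;> simp
  have hsfx : s * f x = |f x| := by
    rw [hs]; split <;> rename_i h
    · rw [one_mul, abs_of_nonneg h]
    · rw [neg_one_mul, abs_of_neg (lt_of_not_ge h)]
  refine ⟨s • x, ?_, ?_, ?_⟩
  · rw [norm_smul, Real.norm_eq_abs, hs1, one_mul]; exact hx1.le
  · rw [map_smul, smul_eq_mul, hsfx]; linarith
  · have key : ‖s • x + (f (s • x)) • y‖ = ‖x + f x • y‖ := by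
      have : s • x + (f (s • x)) • y = s • (x + f x • y) := by
        rw [map_smul, smul_eq_mul, smul_add, smul_smul]
      rw [this, norm_smul, Real.norm_eq_abs, hs1, one_mul]
    have hfsx : f (s • x) = |f x| := by rw [map_smul, smul_eq_mul, hsfx]
    have h3 : ‖y + s • x‖ ≥ ‖s • x + (f (s • x)) • y‖ - ‖(f (s • x)) • y - y‖ := by
      have := norm_sub_norm_le (s • x + (f (s • x)) • y) ((f (s • x)) • y - y)
      have he : s • x + (f (s • x)) • y - ((f (s • x)) • y - y) = y + s • x := by abel
      rw [he] at this; linarith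
    have h4 : ‖(f (s • x)) • y - y‖ = |(|f x|) - 1| := by
      have : (f (s • x)) • y - y = ((|f x|) - 1) • y := by rw [hfsx, sub_smul, one_smul]
      rw [this, norm_smul, Real.norm_eq_abs, hy, mul_one]
    have h5 : |(|f x|) - 1| ≤ η := by
      rw [abs_le]; constructor <;> [linarith [hfx]; linarith [hfx_le]]
    rw [key] at h3
    linarith

/-- A nonzero Banach space `X` has the Daugavet property iff for every `ε > 0` and every
`y ∈ S_X`, the closed convex hull of `{u ∈ (1+ε)B_X : ‖y + u‖ ≥ 2 - ε}` contains `S_X`. -/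
theorem daugavet_iff_closed_convex_hull (X : Type*) [NormedAddCommGroup X] [NormedSpace ℝ X]
    [CompleteSpace X] [Nontrivial X] :
    HasDaugavetProperty X ↔
      ∀ ε : ℝ, 0 < ε → ∀ y : X, ‖y‖ = 1 →
        Metric.sphere (0 : X) 1 ⊆
          closure (convexHull ℝ {u : X | ‖u‖ ≤ 1 + ε ∧ ‖y + u‖ ≥ 2 - ε}) := by
  constructor
  · -- Daugavet ⇒ convex hull condition
    intro hD ε hε y hy x hx
    rw [Metric.mem_sphere, dist_zero_right] at hx
    by_contra hxC
    set M := {u : X | ‖u‖ ≤ 1 + ε ∧ ‖y + u‖ ≥ 2 - ε} with hM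
    obtain ⟨f, α, hfa, hfx⟩ :=
      geometric_hahn_banach_closed_point (convex_convexHull ℝ M).closure isClosed_closure hxC
    have hyM : y ∈ M := by
      refine ⟨by rw [hy]; linarith, ?_⟩
      have h2 : y + y = (2 : ℝ) • y := (two_smul ℝ y).symm
      rw [h2, norm_smul, hy, Real.norm_eq_abs]
      rw [abs_of_nonneg (by norm_num : (0:ℝ) ≤ 2)]
      linarith
    have hfy : f y < α := hfa y (subset_closure (subset_convexHull ℝ M hyM))
    have hf0 : f ≠ 0 := by
      intro h; rw [h] at hfy hfx; simp at hfy hfx; linarith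
    have hfn : 0 < ‖f‖ := norm_pos_iff.mpr hf0
    have hαf : α < ‖f‖ := by
      refine lt_of_lt_of_le hfx ?_
      calc f x ≤ |f x| := le_abs_self _
      _ = ‖f x‖ := (Real.norm_eq_abs _).symm
      _ ≤ ‖f‖ * ‖x‖ := f.le_opNorm x
      _ = ‖f‖ := by rw [hx, mul_one]
    set η : ℝ := min (ε / 2) ((‖f‖ - α) / (2 * ‖f‖)) with hηdef
    have hη : 0 < η := lt_min (by linarith) (div_pos (by linarith) (by linarith))
    have hηa : η ≤ ε / 2 := min_le_left _ _
    have hη2 : η ≤ (‖f‖ - α) / (2 * ‖f‖) := min_le_right _ _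
    clear_value η
    have hf1 : ‖‖f‖⁻¹ • f‖ = 1 := by
      rw [norm_smul ‖f‖⁻¹ f, norm_inv, norm_norm, inv_mul_cancel₀ hfn.ne']
    obtain ⟨u, hu1, hu2, hu3⟩ := daugavet_slice hD (‖f‖⁻¹ • f) hf1 y hy hη
    have huM : u ∈ M := by
      constructor
      · linarith
      · simp only [ge_iff_le]; linarith
    have hfu_lt : f u < α := hfa u (subset_closure (subset_convexHull ℝ M huM))
    have happ : (‖f‖⁻¹ • f) u = ‖f‖⁻¹ * f u := rfl
    rw [happ] at hu2
    have h6 : ‖f‖ * (1 - η) ≤ f u := by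
      have h7 := mul_le_mul_of_nonneg_left hu2 hfn.le
      have h8 : ‖f‖ * (‖f‖⁻¹ * f u) = f u := by field_simp
      rw [h8] at h7; exact h7
    have hη3 : η * (2 * ‖f‖) ≤ ‖f‖ - α := (le_div_iff₀ (by positivity)).mp hη2
    have h7 : ‖f‖ * (1 - η) = ‖f‖ - ‖f‖ * η := by ring
    have h8 : η * (2 * ‖f‖) = 2 * (‖f‖ * η) := by ring
    rw [h7] at h6; rw [h8] at hη3; linarith
  · -- convex hull condition ⇒ Daugavet
    intro hconv φ y
    set T := φ.smulRight y with hT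
    have hTnorm : ‖T‖ = ‖φ‖ * ‖y‖ := ContinuousLinearMap.norm_smulRight_apply φ y
    have hupper : ‖ContinuousLinearMap.id ℝ X + T‖ ≤ 1 + ‖T‖ := by
      calc ‖ContinuousLinearMap.id ℝ X + T‖ ≤ ‖ContinuousLinearMap.id ℝ X‖ + ‖T‖ :=
        norm_add_le _ _
      _ ≤ 1 + ‖T‖ := by rw [ContinuousLinearMap.norm_id]
    rcases eq_or_ne φ 0 with hφ0 | hφ0
    · have : T = 0 := by rw [hT, hφ0]; ext z; simp
      rw [this, add_zero, norm_zero, add_zero, ContinuousLinearMap.norm_id]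
    rcases eq_or_ne y 0 with hy0 | hy0
    · have : T = 0 := by rw [hT, hy0]; ext z; simp
      rw [this, add_zero, norm_zero, add_zero, ContinuousLinearMap.norm_id]
    have hφn : 0 < ‖φ‖ := norm_pos_iff.mpr hφ0
    have hyn : 0 < ‖y‖ := norm_pos_iff.mpr hy0
    set c : ℝ := ‖φ‖ * ‖y‖ with hc
    have hcpos : 0 < c := mul_pos hφn hyn
    clear_value c
    refine le_antisymm hupper ?_
    rw [hTnorm]
    set φ₀ : X →L[ℝ] ℝ := ‖φ‖⁻¹ • φ with hφ₀
    set y₀ : X := ‖y‖⁻¹ • y with hy₀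
    have hφ₀n : ‖φ₀‖ = 1 := by
      rw [hφ₀, norm_smul ‖φ‖⁻¹ φ, norm_inv, norm_norm, inv_mul_cancel₀ hφn.ne']
    have hy₀n : ‖y₀‖ = 1 := by
      rw [hy₀, norm_smul, norm_inv, norm_norm, inv_mul_cancel₀ hyn.ne']
    refine le_of_forall_pos_le_add ?_
    intro δ hδ
    set K : ℝ := 6 * c + 2 with hK
    have hKpos : 0 < K := by positivity
    set ε' : ℝ := min (1 / 2) (δ / K) with hε'def
    have hε' : 0 < ε' := lt_min (by norm_num) (by positivity)
    have hε'half : ε' ≤ 1 / 2 := min_le_left _ _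
    have hε'K : ε' * K ≤ δ := by
      have h1 : ε' ≤ δ / K := min_le_right _ _
      calc ε' * K ≤ δ / K * K := mul_le_mul_of_nonneg_right h1 hKpos.le
      _ = δ := div_mul_cancel₀ δ hKpos.ne'
    clear_value K
    clear_value ε'
    -- find x on the sphere with φ₀ x > 1 - ε'
    obtain ⟨x₁, hx₁1, hx₁2⟩ := φ₀.exists_lt_apply_of_lt_opNorm
      (r := 1 - ε') (by rw [hφ₀n]; linarith)
    rw [Real.norm_eq_abs] at hx₁2
    have hx₁pos : 0 < ‖x₁‖ := by
      rcases eq_or_lt_of_le (norm_nonneg x₁) with h | h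
      · exfalso
        have : x₁ = 0 := by rwa [eq_comm, norm_eq_zero] at h
        rw [this] at hx₁2; simp at hx₁2; linarith
      · exact h
    set s : ℝ := if 0 ≤ φ₀ x₁ then 1 else -1 with hs
    have hs1 : |s| = 1 := by rw [hs]; split <;> simp
    have hsfx : s * φ₀ x₁ = |φ₀ x₁| := by
      rw [hs]; split <;> rename_i h
      · rw [one_mul, abs_of_nonneg h]
      · rw [neg_one_mul, abs_of_neg (lt_of_not_ge h)]
    clear_value s
    set x : X := (s * ‖x₁‖⁻¹) • x₁ with hxdef
    have hxs : ‖x‖ = 1 := by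
      rw [hxdef, norm_smul, Real.norm_eq_abs, abs_mul, hs1, one_mul,
        abs_inv, abs_norm, inv_mul_cancel₀ hx₁pos.ne']
    have hφ₀x : 1 - ε' < φ₀ x := by
      have h1 : φ₀ x = ‖x₁‖⁻¹ * |φ₀ x₁| := by
        rw [hxdef, map_smul, smul_eq_mul, mul_comm s ‖x₁‖⁻¹, mul_assoc, hsfx]
      rw [h1]
      have h2 : |φ₀ x₁| ≤ ‖x₁‖⁻¹ * |φ₀ x₁| := by
        have h3 : 1 ≤ ‖x₁‖⁻¹ := one_le_inv_iff₀.mpr ⟨hx₁pos, hx₁1.le⟩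
        exact le_mul_of_one_le_left (abs_nonneg _) h3
      linarith
    -- x lies in the closed convex hull
    have hxmem : x ∈ closure (convexHull ℝ {u : X | ‖u‖ ≤ 1 + ε' ∧ ‖y₀ + u‖ ≥ 2 - ε'}) := by
      apply hconv ε' hε' y₀ hy₀n
      rw [Metric.mem_sphere, dist_zero_right]; exact hxs
    set M := {u : X | ‖u‖ ≤ 1 + ε' ∧ ‖y₀ + u‖ ≥ 2 - ε'} with hMdef
    obtain ⟨z, hz1, hz2⟩ := Metric.mem_closure_iff.mp hxmem ε' hε'
    -- bound via sSup of φ₀ on M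
    have hMne : M.Nonempty := ⟨y₀, by rw [hy₀n]; linarith, by
      have h2 : y₀ + y₀ = (2 : ℝ) • y₀ := (two_smul ℝ y₀).symm
      rw [h2, norm_smul, hy₀n, Real.norm_eq_abs, abs_of_nonneg (by norm_num : (0:ℝ) ≤ 2)]
      simp only [ge_iff_le]; linarith⟩
    have hbdd : BddAbove (φ₀ '' M) := by
      refine ⟨1 + ε', ?_⟩
      rintro _ ⟨u, hu, rfl⟩
      calc φ₀ u ≤ |φ₀ u| := le_abs_self _
      _ = ‖φ₀ u‖ := (Real.norm_eq_abs _).symm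
      _ ≤ ‖φ₀‖ * ‖u‖ := φ₀.le_opNorm u
      _ ≤ 1 + ε' := by rw [hφ₀n, one_mul]; exact hu.1
    have hzS : φ₀ z ≤ sSup (φ₀ '' M) := by
      have hsub : convexHull ℝ M ⊆ {w : X | φ₀ w ≤ sSup (φ₀ '' M)} := by
        apply convexHull_min
        · intro u hu
          exact le_csSup hbdd ⟨u, hu, rfl⟩
        · exact convex_halfSpace_le (φ₀ : X →ₗ[ℝ] ℝ).isLinear _
      exact hsub hz1
    have hφ₀z : 1 - 2 * ε' < φ₀ z := by
      have h1 : |φ₀ x - φ₀ z| ≤ ‖x - z‖ := by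
        calc |φ₀ x - φ₀ z| = ‖φ₀ (x - z)‖ := by rw [map_sub, Real.norm_eq_abs]
        _ ≤ ‖φ₀‖ * ‖x - z‖ := φ₀.le_opNorm _
        _ = ‖x - z‖ := by rw [hφ₀n, one_mul]
      rw [dist_eq_norm] at hz2
      have := abs_le.mp h1
      linarith [this.1]
    obtain ⟨_, ⟨u, huM, rfl⟩, hu⟩ := exists_lt_of_lt_csSup (hMne.image φ₀)
      (lt_of_lt_of_le hφ₀z hzS : (1 : ℝ) - 2 * ε' < sSup (φ₀ '' M))
    obtain ⟨hu1, hu2⟩ := huM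
    have hu3 : φ₀ u ≤ 1 + ε' := by
      calc φ₀ u ≤ |φ₀ u| := le_abs_self _
      _ = ‖φ₀ u‖ := (Real.norm_eq_abs _).symm
      _ ≤ ‖φ₀‖ * ‖u‖ := φ₀.le_opNorm u
      _ ≤ 1 + ε' := by rw [hφ₀n, one_mul]; exact hu1
    -- Step 1 : ‖u + c • y₀‖ ≥ 1 + c - ε'*(2c+1)
    have step1 : 1 + c - ε' * (2 * c + 1) ≤ ‖u + c • y₀‖ := by
      rcases le_total c 1 with hc1 | hc1
      · have h1 : ‖u + c • y₀‖ ≥ ‖y₀ + u‖ - ‖(1 - c) • y₀‖ := by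
          have he : (y₀ + u) - ((1 - c) • y₀) = u + c • y₀ := by
            rw [sub_smul, one_smul]; abel
          have := norm_sub_norm_le (y₀ + u) ((1 - c) • y₀)
          rw [he] at this; linarith
        have h2 : ‖(1 - c) • y₀‖ = 1 - c := by
          rw [norm_smul, hy₀n, mul_one, Real.norm_eq_abs, abs_of_nonneg (by linarith)]
        have h5 : 0 ≤ ε' * c := mul_nonneg hε'.le hcpos.le
        have h6 : ε' * (2 * c + 1) = 2 * (ε' * c) + ε' := by ring
        rw [h6]; linarith
      · have he : c • (u + y₀) - (c - 1) • u = u + c • y₀ := by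
          rw [smul_add, sub_smul, one_smul]; abel
        have h1 : ‖u + c • y₀‖ ≥ ‖c • (u + y₀)‖ - ‖(c - 1) • u‖ := by
          have := norm_sub_norm_le (c • (u + y₀)) ((c - 1) • u)
          rw [he] at this; linarith
        have h2 : ‖c • (u + y₀)‖ = c * ‖u + y₀‖ := by
          rw [norm_smul, Real.norm_eq_abs, abs_of_nonneg hcpos.le]
        have h3 : ‖(c - 1) • u‖ ≤ (c - 1) * (1 + ε') := by
          rw [norm_smul, Real.norm_eq_abs, abs_of_nonneg (by linarith)]
          exact mul_le_mul_of_nonneg_left hu1 (by linarith)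
        have h4 : ‖u + y₀‖ = ‖y₀ + u‖ := by rw [add_comm]
        have h5 : c * (2 - ε') ≤ c * ‖y₀ + u‖ := mul_le_mul_of_nonneg_left hu2 hcpos.le
        have h6 : ε' * (2 * c + 1) = 2 * (ε' * c) + ε' := by ring
        have h7 : c * (2 - ε') = 2 * c - c * ε' := by ring
        have h8 : (c - 1) * (1 + ε') = c + c * ε' - 1 - ε' := by ring
        have h9 : ε' * c = c * ε' := by ring
        rw [h2, h4] at h1
        rw [h6, h9]; rw [h7] at h5; rw [h8] at h3; linarith
    -- Step 2 : ‖u + (c * φ₀ u) • y₀‖ ≥ 1 + c - ε'*(5c+1)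
    have habs : |φ₀ u - 1| ≤ 3 * ε' := by
      rw [abs_le]; constructor <;> [linarith [hu]; linarith [hu3]]
    have step2 : 1 + c - ε' * (5 * c + 1) ≤ ‖u + (c * φ₀ u) • y₀‖ := by
      have he : (u + c • y₀) + (c * (φ₀ u - 1)) • y₀ = u + (c * φ₀ u) • y₀ := by
        rw [mul_sub, mul_one, sub_smul]; abel
      have h1 : ‖u + (c * φ₀ u) • y₀‖ ≥ ‖u + c • y₀‖ - ‖(c * (φ₀ u - 1)) • y₀‖ := by
        have := norm_sub_norm_le (u + c • y₀) (-((c * (φ₀ u - 1)) • y₀))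
        rw [sub_neg_eq_add, he, norm_neg] at this; linarith
      have h2 : ‖(c * (φ₀ u - 1)) • y₀‖ ≤ c * (3 * ε') := by
        rw [norm_smul, hy₀n, mul_one, Real.norm_eq_abs, abs_mul, abs_of_nonneg hcpos.le]
        exact mul_le_mul_of_nonneg_left habs hcpos.le
      have h3 : ε' * (5 * c + 1) = ε' * (2 * c + 1) + c * (3 * ε') := by ring
      rw [h3]; linarith
    -- Step 3 : (Id + T) u = u + (c * φ₀ u) • y₀
    have step3 : (ContinuousLinearMap.id ℝ X + T) u = u + (c * φ₀ u) • y₀ := by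
      have h1 : (ContinuousLinearMap.id ℝ X + T) u = u + φ u • y := rfl
      rw [h1]
      congr 1
      rw [hy₀, hφ₀, hc]
      rw [ContinuousLinearMap.smul_apply, smul_eq_mul, smul_smul]
      congr 1
      field_simp
    -- conclusion
    have hA : ‖(ContinuousLinearMap.id ℝ X + T) u‖ ≤
        ‖ContinuousLinearMap.id ℝ X + T‖ * (1 + ε') := by
      calc ‖(ContinuousLinearMap.id ℝ X + T) u‖
          ≤ ‖ContinuousLinearMap.id ℝ X + T‖ * ‖u‖ :=
        (ContinuousLinearMap.id ℝ X + T).le_opNorm u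
      _ ≤ ‖ContinuousLinearMap.id ℝ X + T‖ * (1 + ε') := by
        apply mul_le_mul_of_nonneg_left hu1 (norm_nonneg _)
    rw [step3] at hA
    have hAle : ‖ContinuousLinearMap.id ℝ X + T‖ ≤ 1 + c := by rw [hTnorm] at hupper; exact hupper
    rw [hK] at hε'K
    have h10 : ‖ContinuousLinearMap.id ℝ X + T‖ * (1 + ε') =
        ‖ContinuousLinearMap.id ℝ X + T‖ + ε' * ‖ContinuousLinearMap.id ℝ X + T‖ := by ring
    have h11 : ε' * ‖ContinuousLinearMap.id ℝ X + T‖ ≤ ε' * (1 + c) :=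
      mul_le_mul_of_nonneg_left hAle hε'.le
    have h12 : ε' * (6 * c + 2) = ε' * (5 * c + 1) + ε' * (1 + c) := by ring
    rw [h12] at hε'K
    rw [h10] at hA
    linarith
end

section
/- If a nonzero Banach space X has the Daugavet property, then X has the slice diameter two property; that is, for every x* in the unit sphere S_{X*} of the dual and every ε > 0, the slice Slice(B_X, x*, ε) := {x ∈ B_X : x*(x) > 1 − ε} has diameter equal to 2. -/
/-- If a nonzero Banach space `X` has the Daugavet property, then every slice
`{x ∈ B_X : x*(x) > 1 - ε}`, for `x*` in the unit sphere of the dual and `ε > 0`,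
has diameter equal to `2`. -/
theorem daugavet_implies_slice_diameter_two (X : Type*) [NormedAddCommGroup X]
    [NormedSpace ℝ X] [CompleteSpace X] [Nontrivial X]
    (h : HasDaugavetProperty X) :
    ∀ φ : X →L[ℝ] ℝ, ‖φ‖ = 1 → ∀ ε : ℝ, 0 < ε →
      Metric.diam {x : X | ‖x‖ ≤ 1 ∧ φ x > 1 - ε} = 2 := by
  intro φ hφ ε hε
  have hb : Bornology.IsBounded {x : X | ‖x‖ ≤ 1 ∧ φ x > 1 - ε} := by
    apply (Metric.isBounded_closedBall (x := (0 : X)) (r := 1)).subset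
    intro x hx
    simpa [Metric.mem_closedBall, dist_zero_right] using hx.1
  apply le_antisymm
  · apply Metric.diam_le_of_forall_dist_le (by norm_num)
    intro x hx y hy
    calc dist x y = ‖x - y‖ := dist_eq_norm x y
      _ ≤ ‖x‖ + ‖y‖ := norm_sub_le _ _
      _ ≤ 2 := by linarith [hx.1, hy.1]
  · refine le_of_forall_pos_le_add (fun θ hθ => ?_)
    set δ : ℝ := min (min ε θ) 1 / 4 with hδdef
    have hδ0 : 0 < δ := by
      have := lt_min (lt_min hε hθ) one_pos
      positivity
    have hδε : 4 * δ ≤ ε := by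
      have h1 : min (min ε θ) 1 ≤ ε := le_trans (min_le_left _ _) (min_le_left _ _)
      simp only [hδdef]; linarith
    have hδθ : 4 * δ ≤ θ := by
      have h1 : min (min ε θ) 1 ≤ θ := le_trans (min_le_left _ _) (min_le_right _ _)
      simp only [hδdef]; linarith
    have hδ1 : 4 * δ ≤ 1 := by
      have h1 : min (min ε θ) 1 ≤ 1 := min_le_right _ _
      simp only [hδdef]; linarith
    -- choose a point `z` in the small slice
    obtain ⟨z0, hz0n, hz0⟩ := φ.exists_lt_apply_of_lt_opNorm (r := 1 - δ)
      (by rw [hφ]; linarith)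
    have hz0' : 1 - δ < |φ z0| := by simpa [Real.norm_eq_abs] using hz0
    obtain ⟨z, hzn, hzφ⟩ : ∃ z : X, ‖z‖ ≤ 1 ∧ 1 - δ < φ z := by
      rcases le_or_gt 0 (φ z0) with hs | hs
      · exact ⟨z0, hz0n.le, by rwa [abs_of_nonneg hs] at hz0'⟩
      · refine ⟨-z0, by simpa using hz0n.le, ?_⟩
        rw [map_neg]
        rwa [abs_of_neg hs] at hz0'
    have hznl : 1 - δ ≤ ‖z‖ := by
      have := φ.le_opNorm z
      rw [hφ, one_mul] at this
      have : φ z ≤ ‖z‖ := le_trans (le_abs_self _) (by simpa [Real.norm_eq_abs] using this)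
      linarith
    -- the Daugavet operator
    set f : X →L[ℝ] X := ContinuousLinearMap.id ℝ X + φ.smulRight (-z) with hf
    have hfn : ‖f‖ = 1 + ‖z‖ := by
      rw [hf, h φ (-z), ContinuousLinearMap.norm_smulRight_apply, hφ, one_mul, norm_neg]
    obtain ⟨x, hxn, hxf⟩ := f.exists_lt_apply_of_lt_opNorm (r := 1 + ‖z‖ - δ)
      (by rw [hfn]; linarith)
    have hfx : ∀ w : X, f w = w - φ w • z := by
      intro w
      simp [hf, smul_neg, sub_eq_add_neg]
    rw [hfx] at hxf
    -- fix the sign of `x`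
    obtain ⟨u, hun, huf, huφ⟩ : ∃ u : X, ‖u‖ ≤ 1 ∧ 1 + ‖z‖ - δ < ‖u - φ u • z‖ ∧ 0 ≤ φ u := by
      rcases le_or_gt 0 (φ x) with hs | hs
      · exact ⟨x, hxn.le, hxf, hs⟩
      · refine ⟨-x, by simpa using hxn.le, ?_, by simpa using hs.le⟩
        have : (-x) - φ (-x) • z = -(x - φ x • z) := by
          simp [neg_smul, sub_eq_add_neg]
          abel
        rw [this, norm_neg]
        exact hxf
    -- estimates
    have huφ1 : φ u ≤ 1 := by
      have := φ.le_opNorm u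
      rw [hφ, one_mul] at this
      exact le_trans (le_abs_self _) (le_trans (by simp [Real.norm_eq_abs]) (this.trans hun))
    have hub : ‖u - φ u • z‖ ≤ 1 + φ u * ‖z‖ := by
      calc ‖u - φ u • z‖ ≤ ‖u‖ + ‖φ u • z‖ := norm_sub_le _ _
        _ = ‖u‖ + |φ u| * ‖z‖ := by rw [norm_smul, Real.norm_eq_abs]
        _ = ‖u‖ + φ u * ‖z‖ := by rw [abs_of_nonneg huφ]
        _ ≤ 1 + φ u * ‖z‖ := by linarith
    have hzpos : (1 : ℝ) / 2 ≤ ‖z‖ := by linarith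
    have huφbig : 1 - 2 * δ < φ u := by nlinarith
    -- u is in the slice and far from z
    have huslice : u ∈ {x : X | ‖x‖ ≤ 1 ∧ φ x > 1 - ε} := ⟨hun, by linarith⟩
    have hzslice : z ∈ {x : X | ‖x‖ ≤ 1 ∧ φ x > 1 - ε} := ⟨hzn, by linarith⟩
    have hdist : 2 - θ ≤ dist u z := by
      have key : ‖u - φ u • z‖ ≤ ‖u - z‖ + (1 - φ u) * ‖z‖ := by
        have hdecomp : u - φ u • z = (u - z) + (1 - φ u) • z := by
          rw [sub_smul, one_smul]
          abel
        calc ‖u - φ u • z‖ = ‖(u - z) + (1 - φ u) • z‖ := by rw [hdecomp]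
          _ ≤ ‖u - z‖ + ‖(1 - φ u) • z‖ := norm_add_le _ _
          _ = ‖u - z‖ + |1 - φ u| * ‖z‖ := by rw [norm_smul, Real.norm_eq_abs]
          _ = ‖u - z‖ + (1 - φ u) * ‖z‖ := by rw [abs_of_nonneg (by linarith)]
      rw [dist_eq_norm]
      have hzn1 : ‖z‖ ≤ 1 := hzn
      nlinarith
    linarith [Metric.dist_le_diam_of_mem hb huslice hzslice]
end

section
/- Let X be a nonzero Banach space. If the set of Daugavet points of X is dense in the unit sphere S_X, then X has the Daugavet property. -/
set_option maxHeartbeats 1000000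


/-- `y ∈ S_X` is a Daugavet point if for every `ε > 0` the closed unit ball equals the
closed convex hull of `{u ∈ (1+ε)B_X : ‖y + u‖ ≥ 2 - ε}`. -/
def IsDaugavetPoint {X : Type*} [NormedAddCommGroup X] [NormedSpace ℝ X] (y : X) : Prop :=
  ‖y‖ = 1 ∧ ∀ ε : ℝ, 0 < ε →
    {x : X | ‖x‖ ≤ 1} = closure (convexHull ℝ {u : X | ‖u‖ ≤ 1 + ε ∧ ‖y + u‖ ≥ 2 - ε})

lemma daugavet_key {X : Type*} [NormedAddCommGroup X] [NormedSpace ℝ X] [CompleteSpace X]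
    (h : Metric.sphere (0 : X) 1 ⊆ closure {y : X | IsDaugavetPoint y})
    (φ : X →L[ℝ] ℝ) (y : X) (hy : ‖y‖ = 1) (hφ : 0 < ‖φ‖) :
    1 + ‖φ‖ ≤ ‖ContinuousLinearMap.id ℝ X + φ.smulRight y‖ := by
  refine le_of_forall_pos_le_add fun η hη => ?_
  set a := ‖φ‖ with ha
  set N := ‖ContinuousLinearMap.id ℝ X + φ.smulRight y‖ with hN
  set ε : ℝ := min (min (a/2) (1/4)) (η/(3+4*a)) with hε
  have hε0 : 0 < ε := by
    apply lt_min (lt_min (by linarith) (by norm_num))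
    positivity
  have hεa : ε ≤ a/2 := le_trans (min_le_left _ _) (min_le_left _ _)
  have hε4 : ε ≤ 1/4 := le_trans (min_le_left _ _) (min_le_right _ _)
  have hεη : ε * (3+4*a) ≤ η := by
    rw [← le_div_iff₀ (by positivity)]
    exact le_trans (le_of_eq hε) (min_le_right _ _)
  -- find a Daugavet point z close to y
  have hy' : y ∈ Metric.sphere (0 : X) 1 := by simp [hy]
  have hyc := h hy'
  rw [Metric.mem_closure_iff] at hyc
  obtain ⟨z, hz, hdz⟩ := hyc ε hε0
  rw [dist_eq_norm] at hdz
  obtain ⟨hz1, hz2⟩ := hz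
  have hball := hz2 ε hε0
  -- find u in the defining set with large φ u
  have hu : ∃ u : X, (‖u‖ ≤ 1 + ε ∧ ‖z + u‖ ≥ 2 - ε) ∧ a - ε < φ u := by
    by_contra hcon
    push_neg at hcon
    have hsub : {u : X | ‖u‖ ≤ 1 + ε ∧ ‖z + u‖ ≥ 2 - ε} ⊆ {w : X | φ w ≤ a - ε} :=
      fun u hu => hcon u ⟨hu.1, hu.2⟩
    have hconv : Convex ℝ {w : X | φ w ≤ a - ε} :=
      convex_halfSpace_le (φ.toLinearMap.isLinear) _
    have hcl : IsClosed {w : X | φ w ≤ a - ε} :=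
      isClosed_le φ.continuous continuous_const
    have hc : closure (convexHull ℝ {u : X | ‖u‖ ≤ 1 + ε ∧ ‖z + u‖ ≥ 2 - ε})
        ⊆ {w : X | φ w ≤ a - ε} :=
      closure_minimal (convexHull_min hsub hconv) hcl
    obtain ⟨x, hx1, hx2⟩ := φ.exists_lt_apply_of_lt_opNorm (show a - ε < ‖φ‖ by
      rw [← ha]; linarith)
    rw [Real.norm_eq_abs] at hx2
    set x' : X := if 0 ≤ φ x then x else -x with hx'
    have hx'n : ‖x'‖ ≤ 1 := by
      rw [hx']; split <;> simp [le_of_lt hx1]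
    have hx'φ : a - ε < φ x' := by
      rw [hx']; split <;> rename_i hs
      · rwa [abs_of_nonneg hs] at hx2
      · rw [map_neg]; rwa [abs_of_neg (not_le.1 hs)] at hx2
    have : x' ∈ {x : X | ‖x‖ ≤ 1} := hx'n
    rw [hball] at this
    exact absurd (hc this) (not_le.2 hx'φ)
  obtain ⟨u, ⟨hu1, hu2⟩, hu3⟩ := hu
  have huz0 : u + z ≠ 0 := by
    intro h0
    rw [add_comm, h0, norm_zero] at hu2
    linarith
  obtain ⟨ψ, hψ1, hψ2⟩ := exists_dual_vector ℝ (u + z) (norm_ne_zero_iff.2 huz0)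
  have hψle : ∀ v : X, ψ v ≤ ‖v‖ := by
    intro v
    calc ψ v ≤ |ψ v| := le_abs_self _
    _ = ‖ψ v‖ := (Real.norm_eq_abs _).symm
    _ ≤ ‖ψ‖ * ‖v‖ := ψ.le_opNorm v
    _ = ‖v‖ := by rw [hψ1, one_mul]
  have hψuz : ψ (u + z) = ‖u + z‖ := by exact_mod_cast hψ2
  have huz2 : (2 : ℝ) - ε ≤ ‖u + z‖ := by rwa [add_comm] at hu2
  have hψz1 : ψ z ≤ 1 := le_trans (hψle z) (le_of_eq hz1)
  have hψu1 : ψ u ≤ 1 + ε := le_trans (hψle u) hu1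
  have hψadd : ψ u + ψ z = ψ (u + z) := (map_add ψ u z).symm
  have hψu : 1 - ε ≤ ψ u := by
    have := hψuz; linarith [hψadd, huz2]
  have hψz : 1 - 2*ε ≤ ψ z := by linarith [hψadd, huz2, hψu1, hψuz.symm ▸ huz2]
  have hψy : 1 - 3*ε ≤ ψ y := by
    have h1 : ψ y = ψ z + ψ (y - z) := by rw [← map_add]; congr 1; abel
    have h2 : ψ (y - z) ≥ -‖y - z‖ := by
      have := hψle (-(y - z)); rw [map_neg, norm_neg] at this; linarith
    linarith
  -- key estimate
  have happ : (ContinuousLinearMap.id ℝ X + φ.smulRight y) u = u + φ u • y := by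
    simp
  have hmain : ψ u + φ u * ψ y ≤ N * (1 + ε) := by
    have h1 : ψ (u + φ u • y) = ψ u + φ u * ψ y := by
      rw [map_add, map_smul, smul_eq_mul]
    have h2 : ψ (u + φ u • y) ≤ ‖u + φ u • y‖ := hψle _
    have h3 : ‖(ContinuousLinearMap.id ℝ X + φ.smulRight y) u‖ ≤ N * ‖u‖ :=
      (ContinuousLinearMap.id ℝ X + φ.smulRight y).le_opNorm u
    rw [happ] at h3
    have hN0 : (0:ℝ) ≤ N := norm_nonneg _
    nlinarith [h3, hu1]
  have hφuψy : (a - ε) * (1 - 3*ε) ≤ φ u * ψ y := by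
    have ha0 : 0 ≤ a - ε := by linarith
    have hy0 : 0 ≤ ψ y := by linarith
    nlinarith
  have hN0 : (0:ℝ) ≤ N := norm_nonneg _
  nlinarith [hmain, hφuψy, hψu, hη, hε0, hεη]

/-- If the set of Daugavet points of a nonzero Banach space `X` is dense in the unit
sphere `S_X`, then `X` has the Daugavet property. -/
theorem daugavet_of_dense_daugavet_points (X : Type*) [NormedAddCommGroup X]
    [NormedSpace ℝ X] [CompleteSpace X] [Nontrivial X]
    (h : Metric.sphere (0 : X) 1 ⊆ closure {y : X | IsDaugavetPoint y}) :
    HasDaugavetProperty X := by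
  intro φ y
  have hub : ‖ContinuousLinearMap.id ℝ X + φ.smulRight y‖ ≤ 1 + ‖φ.smulRight y‖ := by
    calc ‖ContinuousLinearMap.id ℝ X + φ.smulRight y‖
        ≤ ‖ContinuousLinearMap.id ℝ X‖ + ‖φ.smulRight y‖ := norm_add_le _ _
      _ = 1 + ‖φ.smulRight y‖ := by rw [ContinuousLinearMap.norm_id]
  by_cases hy : y = 0
  · have h0 : φ.smulRight (0:X) = 0 := by ext x; simp
    rw [hy, h0, add_zero, norm_zero, add_zero, ContinuousLinearMap.norm_id]
  by_cases hφ : φ = 0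
  · have h0 : (0 : X →L[ℝ] ℝ).smulRight y = 0 := by ext x; simp
    rw [hφ, h0, add_zero, norm_zero, add_zero, ContinuousLinearMap.norm_id]
  have hyn : 0 < ‖y‖ := norm_pos_iff.2 hy
  have hφn : 0 < ‖φ‖ := norm_pos_iff.2 hφ
  set φ' : X →L[ℝ] ℝ := ‖y‖ • φ with hφ'
  set y' : X := ‖y‖⁻¹ • y with hy'
  have heq : φ'.smulRight y' = φ.smulRight y := by
    ext x
    simp [hφ', hy', smul_smul]
    rw [mul_comm ‖y‖ (φ x), mul_assoc, mul_inv_cancel₀ (ne_of_gt hyn), mul_one]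
  have hy'1 : ‖y'‖ = 1 := by
    rw [hy', norm_smul, norm_inv, norm_norm, inv_mul_cancel₀ (ne_of_gt hyn)]
  have hT : ‖φ.smulRight y‖ = ‖φ‖ * ‖y‖ := ContinuousLinearMap.norm_smulRight_apply φ y
  have hφ'n : ‖φ'‖ = ‖φ‖ * ‖y‖ := by
    rw [← mul_one ‖φ'‖, ← hy'1, ← ContinuousLinearMap.norm_smulRight_apply, heq, hT]
  have hlb := daugavet_key h φ' y' hy'1 (by rw [hφ'n]; positivity)
  rw [heq, hφ'n, ← hT] at hlb
  linarith [hub, hlb]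
end
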